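/- For all imaginary octonions p and q with ⟨p,q⟩ = 0 and every octonion x, one has p(p(qx)) = p²(qx) and p(q(px)) = −p²(qx). (In the paper's composition notation: p∘(p∘q) = p² q = −(p∘q)∘p.) -/

import Mathlib

/-! Octonions are left alternative, `x (x y) = (x x) y`: in Cayley–Dickson coordinates this only
uses that `a + star a` and `star a * a` are real, hence central, in `ℍ`. Linearising gives
`p (q y) + q (p y) = (p q + q p) y`, and for imaginary `p`, `q` one has `p q + q p = -2 ⟨p, q⟩`,
which vanishes by orthogonality. So `q (p x) = -p (q x)`, and both identities reduce to left
alternativity. -/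

noncomputable section

abbrev H := Quaternion ℝ

/-- The octonions 𝕆, as the Cayley–Dickson double of the quaternions:
pairs (a,b) of quaternions. -/
def Oct : Type := H × H

namespace Oct

instance : AddCommGroup Oct := inferInstanceAs (AddCommGroup (H × H))
instance : Module ℝ Oct := inferInstanceAs (Module ℝ (H × H))

def mk' (a b : H) : Oct := (a, b)
def fst : Oct → H := Prod.fst
def snd : Oct → H := Prod.snd

/-- Cayley–Dickson multiplication: (a,b)·(c,d) = (ac − conj(d)b, da + b·conj(c)). -/
instance : Mul Oct :=
  ⟨fun p q => mk' (p.fst * q.fst - star q.snd * p.snd) (q.snd * p.fst + p.snd * star q.fst)⟩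

instance : One Oct := ⟨mk' 1 0⟩

/-- Octonionic conjugation: conj (a,b) = (conj a, −b). -/
def conj (p : Oct) : Oct := mk' (star p.fst) (-p.snd)

/-- The real part of an octonion, as a real scalar. -/
def re (p : Oct) : ℝ := (p.fst).re

/-- The bilinear form ⟨x,y⟩ = (x·conj(y) + y·conj(x))/2, a real scalar. -/
def oinner (p q : Oct) : ℝ := re (p * conj q + q * conj p) / 2

/-- The norm N(x) = x·conj(x), a real scalar. -/
def N (p : Oct) : ℝ := re (p * conj p)

/-- An octonion is imaginary if conj x = −x. -/
def IsIm (p : Oct) : Prop := conj p = -p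

/-- The embedding of the reals into the octonions. -/
def oR (r : ℝ) : Oct := mk' (algebraMap ℝ H r) 0

end Oct

open Oct

theorem Quaternion.commute_self_add_star {R : Type*} [CommRing R] (a b : Quaternion R) :
    Commute (a + star a) b := by
  rw [Quaternion.self_add_star']
  exact Quaternion.coe_commutes _ _

theorem Quaternion.commute_star_mul_self {R : Type*} [CommRing R] (a b : Quaternion R) :
    Commute (star a * a) b := by
  rw [Quaternion.star_mul_self]
  exact Quaternion.coe_commutes _ _

namespace Oct

theorem ext {x y : Oct} (h₁ : x.fst = y.fst) (h₂ : x.snd = y.snd) : x = y := Prod.ext h₁ h₂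

variable (x y z : Oct)

@[simp] theorem fst_mul : (x * y).fst = x.fst * y.fst - star y.snd * x.snd := rfl
@[simp] theorem snd_mul : (x * y).snd = y.snd * x.fst + x.snd * star y.fst := rfl
@[simp] theorem fst_add : (x + y).fst = x.fst + y.fst := rfl
@[simp] theorem snd_add : (x + y).snd = x.snd + y.snd := rfl
@[simp] theorem fst_zero : (0 : Oct).fst = 0 := rfl
@[simp] theorem snd_zero : (0 : Oct).snd = 0 := rfl
@[simp] theorem fst_conj : (conj x).fst = star x.fst := rfl
@[simp] theorem snd_conj : (conj x).snd = -x.snd := rfl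
@[simp] theorem fst_oR (r : ℝ) : (oR r).fst = r := rfl
@[simp] theorem snd_oR (r : ℝ) : (oR r).snd = 0 := rfl

instance : NonUnitalNonAssocRing Oct where
  left_distrib x y z := by
    apply ext <;> simp only [fst_mul, snd_mul, fst_add, snd_add, star_add, mul_add, add_mul] <;> abel
  right_distrib x y z := by
    apply ext <;> simp only [fst_mul, snd_mul, fst_add, snd_add, mul_add, add_mul] <;> abel
  zero_mul x := by apply ext <;> simp
  mul_zero x := by apply ext <;> simp

@[simp] theorem oR_zero : oR 0 = 0 := by apply ext <;> simp

theorem mul_conj_add_mul_conj : x * conj y + y * conj x = oR (2 * oinner x y) := by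
  set s := x.fst * star y.fst + star y.snd * x.snd + (y.fst * star x.fst + star x.snd * y.snd)
  have hs : star s = s := by simp only [s, star_add, star_mul, star_star]; abel
  have hfst : (x * conj y + y * conj x).fst = s := by simp [s]
  apply ext
  · rw [hfst, fst_oR, oinner, re, hfst, mul_div_cancel₀ _ two_ne_zero]
    exact Quaternion.star_eq_self.mp hs
  · simp

theorem mul_mul_self_left : x * (x * y) = (x * x) * y := by
  apply ext <;> simp only [fst_mul, snd_mul, star_add, star_sub, star_mul, star_star]
  · linear_combination (norm := noncomm_ring)
      -(Quaternion.commute_self_add_star x.fst (star y.snd * x.snd)).eq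
      + (Quaternion.commute_star_mul_self x.snd y.fst).eq
  · linear_combination (norm := noncomm_ring)
      -x.snd * (Quaternion.commute_self_add_star x.fst (star y.fst)).eq
      - (Quaternion.commute_star_mul_self x.snd y.snd).eq + star_comm_self' x.snd * y.snd

theorem mul_mul_add_mul_mul : x * (y * z) + y * (x * z) = (x * y + y * x) * z := by
  have h := mul_mul_self_left (x + y) z
  simp only [add_mul, mul_add, mul_mul_self_left] at h ⊢
  linear_combination (norm := abel) h

theorem IsIm.mul_add_mul {x y : Oct} (hx : IsIm x) (hy : IsIm y) :
    x * y + y * x = -oR (2 * oinner x y) := by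
  rw [← mul_conj_add_mul_conj, hx, hy, mul_neg, mul_neg, ← neg_add, neg_neg]

end Oct

/-- For all imaginary octonions p, q with ⟨p,q⟩ = 0 and every octonion x:
p(p(qx)) = p²(qx) and p(q(px)) = −p²(qx), i.e. p∘(p∘q) = p² q = −(p∘q)∘p. -/
theorem comp_ppq (p q : Oct) (hp : IsIm p) (hq : IsIm q)
    (hpq : oinner p q = 0) (x : Oct) :
    p * (p * (q * x)) = (p * p) * (q * x) ∧
    p * (q * (p * x)) = -((p * p) * (q * x)) := by
  have hanticomm : q * (p * x) = -(p * (q * x)) := by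
    rw [eq_neg_iff_add_eq_zero, add_comm, mul_mul_add_mul_mul, hp.mul_add_mul hq, hpq]
    simp
  exact ⟨mul_mul_self_left p (q * x), by rw [hanticomm, mul_neg, mul_mul_self_left]⟩
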